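/- Let n ≥ 2, r > 0, and define e(v, u) := (n/2) λ_max(v ⊗ v − u) for v ∈ ℝⁿ, u ∈ Mₙ⁰. Then the sublevel set {(v, u) ∈ ℝⁿ × Mₙ⁰ : e(v, u) ≤ r²/2} equals the convex hull (in ℝⁿ × Mₙ⁰) of the set K̃(r) := {(ṽ, ṽ ⊗ ṽ − (r²/n) Iₙ) : ṽ ∈ ℝⁿ, |ṽ| = r}. -/

import Mathlib

open scoped BigOperators

noncomputable section

/-- The Euclidean norm of a vector in `ℝ^m`. -/
def eNorm {m : ℕ} (v : Fin m → ℝ) : ℝ := Real.sqrt (∑ i, v i ^ 2)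

/-- `Mₙ⁰`: the submodule of symmetric trace-free `n × n` real matrices. -/
def M0 (n : ℕ) : Submodule ℝ (Matrix (Fin n) (Fin n) ℝ) where
  carrier := {A | A.IsSymm ∧ A.trace = 0}
  add_mem' := fun ha hb => ⟨ha.1.add hb.1, by rw [Matrix.trace_add, ha.2, hb.2, add_zero]⟩
  zero_mem' := ⟨Matrix.isSymm_zero, Matrix.trace_zero ..⟩
  smul_mem' := fun c _ hA => ⟨hA.1.smul c, by rw [Matrix.trace_smul, hA.2, smul_zero]⟩

/-- For `v ∈ ℝⁿ` and `u ∈ Mₙ⁰`, the matrix `v ⊗ v − u` is symmetric (hence Hermitian). -/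
lemma herm_aux {n : ℕ} (v : Fin n → ℝ) (u : M0 n) :
    (Matrix.vecMulVec v v - (u : Matrix (Fin n) (Fin n) ℝ)).IsHermitian := by
  rw [Matrix.IsHermitian, Matrix.conjTranspose_eq_transpose_of_trivial]
  have h1 : (Matrix.vecMulVec v v).IsSymm := by
    apply Matrix.IsSymm.ext
    intro i j
    simp [Matrix.vecMulVec_apply, mul_comm]
  exact h1.sub u.2.1

/-- `e(v, u) = (n/2) λ_max(v ⊗ v − u)`, where `λ_max` is the largest eigenvalue
of the symmetric matrix `v ⊗ v − u`. -/
def efun (n : ℕ) : (Fin n → ℝ) × M0 n → ℝ :=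
  fun p => ((n : ℝ) / 2) * ⨆ i, (herm_aux p.1 p.2).eigenvalues i

/-!
Put `c = r²/n`. The condition `e(v, u) ≤ r²/2` says `c I - (v ⊗ v - u) ⪰ 0`, so under the affine
embedding `(v, u) ↦ (v, M)`, `M = c I + u`, the sublevel set becomes
`{(v, M) : M - v ⊗ v ⪰ 0, tr M = r²}` and `K̃(r)` becomes `{(w, w ⊗ w) : |w|² = r²}`.
That set is convex because along a segment `x ↦ x ⊗ x` fails to be affine only by the
rank-one term `a b (v - w) ⊗ (v - w) ⪰ 0`. Conversely, write `M - v ⊗ v = ∑ λᵢ bᵢ ⊗ bᵢ`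
spectrally and `σ = ∑ λᵢ`: the point `(v, v ⊗ v + σ bᵢ ⊗ bᵢ)` lies on the chord between the two
points of the sphere on the line `v + ℝ bᵢ`, and `(v, M)` is their average with weights `λᵢ / σ`.
-/

open Matrix
open scoped ComplexOrder

namespace Matrix

variable {ι 𝕜 : Type*} [Fintype ι] [DecidableEq ι] [RCLike 𝕜] {A : Matrix ι ι 𝕜}

theorem IsHermitian.posSemidef_smul_one_sub_iff (hA : A.IsHermitian) (c : ℝ) :
    (c • (1 : Matrix ι ι 𝕜) - A).PosSemidef ↔ ∀ i, hA.eigenvalues i ≤ c := by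
  have hc : c • (1 : Matrix ι ι 𝕜) = algebraMap 𝕜 _ c := by
    rw [Algebra.algebraMap_eq_smul_one, RCLike.real_smul_eq_coe_smul (K := 𝕜)]
  have hB : (algebraMap 𝕜 (Matrix ι ι 𝕜) c - A).IsHermitian := by
    rw [← hc]
    exact .sub (by simp [IsHermitian, conjTranspose_smul]) hA
  rw [hc, posSemidef_iff_isHermitian_and_spectrum_nonneg, ← spectrum.singleton_sub_eq,
    hA.spectrum_eq_image_range]
  simp [Set.subset_def, hB]

theorem IsHermitian.eq_sum_eigenvalues_smul_vecMulVec (hA : A.IsHermitian) :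
    A = ∑ i, hA.eigenvalues i • vecMulVec (hA.eigenvectorBasis i) (star (hA.eigenvectorBasis i)) := by
  conv_lhs => rw [hA.spectral_theorem]
  ext j k
  simp [Unitary.conjStarAlgAut_apply, mul_apply, Matrix.sum_apply, diagonal,
    RCLike.real_smul_eq_coe_mul, vecMulVec_apply]
  exact Finset.sum_congr rfl fun i _ => by ring

end Matrix

theorem sub_mul_smul_mem_segment {𝕜 E : Type*} [Field 𝕜] [LinearOrder 𝕜] [IsStrictOrderedRing 𝕜]
    [AddCommGroup E] [Module 𝕜 E] (x y z : E) {t₁ t₂ : 𝕜} (h₁ : t₁ ≤ 0) (h₂ : 0 ≤ t₂) :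
    x - (t₁ * t₂) • z ∈ segment 𝕜 (x + t₁ • y + t₁ ^ 2 • z) (x + t₂ • y + t₂ ^ 2 • z) := by
  rcases (h₁.trans h₂).eq_or_lt with h | hlt
  · obtain rfl : t₁ = 0 := le_antisymm h₁ (h ▸ h₂)
    simp [← h]
  have hd : t₂ - t₁ ≠ 0 := sub_ne_zero.mpr hlt.ne'
  refine ⟨t₂ / (t₂ - t₁), -t₁ / (t₂ - t₁), div_nonneg h₂ (sub_nonneg.mpr hlt.le),
    div_nonneg (neg_nonneg.mpr h₁) (sub_nonneg.mpr hlt.le), by field_simp; ring, ?_⟩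
  have e₀ : t₂ / (t₂ - t₁) + -t₁ / (t₂ - t₁) = 1 := by field_simp; ring
  have e₁ : t₂ / (t₂ - t₁) * t₁ + -t₁ / (t₂ - t₁) * t₂ = 0 := by field_simp; ring
  have e₂ : t₂ / (t₂ - t₁) * t₁ ^ 2 + -t₁ / (t₂ - t₁) * t₂ ^ 2 = -(t₁ * t₂) := by
    field_simp; ring
  linear_combination (norm := module) e₀ • x + e₁ • y + e₂ • z

def outerLift {ι : Type*} (w : ι → ℝ) : (ι → ℝ) × Matrix ι ι ℝ := (w, vecMulVec w w)

theorem outerLift_add_smul {ι : Type*} (v b : ι → ℝ) (t : ℝ) :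
    outerLift (v + t • b) =
      outerLift v + t • (b, vecMulVec v b + vecMulVec b v) + t ^ 2 • (0, vecMulVec b b) := by
  ext <;> simp [outerLift, vecMulVec_apply]
  ring

section OuterLift

variable {ι : Type*} [Fintype ι]

theorem mem_convexHull_outerLift_of_dotProduct_self_eq_one {v b : ι → ℝ} (hb : b ⬝ᵥ b = 1)
    {σ : ℝ} (hσ : 0 ≤ σ) :
    (v, vecMulVec v v + σ • vecMulVec b b) ∈
      convexHull ℝ (outerLift '' {w | w ⬝ᵥ w = v ⬝ᵥ v + σ}) := by
  set a := v ⬝ᵥ b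
  set s := √(a ^ 2 + σ)
  have hs : s ^ 2 = a ^ 2 + σ := Real.sq_sqrt (by positivity)
  have has : |a| ≤ s := Real.abs_le_sqrt (by linarith)
  have mem : ∀ t, (t + a) ^ 2 = s ^ 2 →
      outerLift (v + t • b) ∈ outerLift '' {w | w ⬝ᵥ w = v ⬝ᵥ v + σ} := fun t ht =>
    ⟨v + t • b, by
      simp only [Set.mem_ofPred_eq, dotProduct_add, add_dotProduct, dotProduct_smul,
        smul_dotProduct, hb, smul_eq_mul, dotProduct_comm b v]
      linear_combination ht + hs, rfl⟩
  have hseg := sub_mul_smul_mem_segment (outerLift v) (b, vecMulVec v b + vecMulVec b v)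
    (0, vecMulVec b b) (t₁ := -a - s) (t₂ := -a + s)
    (by linarith [neg_abs_le a]) (by linarith [le_abs_self a])
  rw [← outerLift_add_smul, ← outerLift_add_smul] at hseg
  have hmid : outerLift v - ((-a - s) * (-a + s)) • ((0 : ι → ℝ), vecMulVec b b) =
      (v, vecMulVec v v + σ • vecMulVec b b) := by
    have : -((-a - s) * (-a + s)) = σ := by linear_combination hs
    simp [outerLift, ← this, sub_eq_add_neg, neg_smul]
  rw [← hmid]
  exact segment_subset_convexHull (mem _ (by ring)) (mem _ (by ring)) hseg

theorem mem_convexHull_outerLift_of_posSemidef {v : ι → ℝ} {M : Matrix ι ι ℝ}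
    (h : (M - vecMulVec v v).PosSemidef) :
    (v, M) ∈ convexHull ℝ (outerLift '' {w | w ⬝ᵥ w = M.trace}) := by
  classical
  set C := M - vecMulVec v v
  have hC := h.isHermitian
  have htr : M.trace = v ⬝ᵥ v + C.trace := by simp [C]
  rcases h.trace_nonneg.eq_or_lt with hσ | hσ
  · have hM : M = vecMulVec v v := sub_eq_zero.mp (h.trace_eq_zero_iff.mp hσ.symm)
    exact subset_convexHull ℝ _ ⟨v, by simp [htr, ← hσ], by rw [hM]; rfl⟩
  set σ := C.trace
  have hsum : ∑ i, hC.eigenvalues i = σ := by simp [σ, hC.trace_eq_sum_eigenvalues]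
  have hunit : ∀ i, (hC.eigenvectorBasis i : ι → ℝ) ⬝ᵥ hC.eigenvectorBasis i = 1 := fun i => by
    have h := real_inner_self_eq_norm_sq (hC.eigenvectorBasis i)
    rwa [hC.eigenvectorBasis.orthonormal.1 i, one_pow] at h
  have hM : (v, M) = ∑ i, (hC.eigenvalues i / σ) •
      (v, vecMulVec v v + σ • vecMulVec (hC.eigenvectorBasis i) (hC.eigenvectorBasis i)) := by
    have hC_sum := hC.eq_sum_eigenvalues_smul_vecMulVec
    simp only [star_trivial] at hC_sum
    ext : 1
    · simp [Prod.fst_sum, ← Finset.sum_smul, ← Finset.sum_div, hsum, hσ.ne']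
    · simp only [Prod.snd_sum, Prod.smul_mk, smul_add, smul_smul, Finset.sum_add_distrib,
        ← Finset.sum_smul, ← Finset.sum_div, hsum, div_self hσ.ne', one_smul,
        div_mul_cancel₀ _ hσ.ne', ← hC_sum, C, add_sub_cancel]
  rw [hM]
  refine (convex_convexHull ℝ _).sum_mem (fun i _ => div_nonneg (h.eigenvalues_nonneg i) hσ.le)
    (by rw [← Finset.sum_div, hsum, div_self hσ.ne']) fun i _ => ?_
  rw [htr]
  exact mem_convexHull_outerLift_of_dotProduct_self_eq_one (hunit i) hσ.le

theorem convex_setOf_posSemidef_sub_vecMulVec (ρ : ℝ) :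
    Convex ℝ {p : (ι → ℝ) × Matrix ι ι ℝ |
      (p.2 - vecMulVec p.1 p.1).PosSemidef ∧ p.2.trace = ρ} := by
  rintro ⟨v, M⟩ ⟨hM, hMρ⟩ ⟨w, N⟩ ⟨hN, hNρ⟩ a b ha hb hab
  have key : (a • M + b • N) - vecMulVec (a • v + b • w) (a • v + b • w) =
      a • (M - vecMulVec v v) + b • (N - vecMulVec w w) + (a * b) • vecMulVec (v - w) (v - w) := by
    obtain rfl : b = 1 - a := by linarith
    ext i j
    simp [vecMulVec_apply]
    ring
  refine ⟨?_, ?_⟩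
  · simp only [Prod.smul_mk, Prod.mk_add_mk, key]
    have hvw := posSemidef_vecMulVec_self_star (v - w)
    rw [star_trivial] at hvw
    exact ((hM.smul ha).add (hN.smul hb)).add (hvw.smul (mul_nonneg ha hb))
  · simp [trace_add, trace_smul, hMρ, hNρ, ← add_mul, hab]

theorem mem_convexHull_outerLift_iff {ρ : ℝ} {v : ι → ℝ} {M : Matrix ι ι ℝ} :
    (v, M) ∈ convexHull ℝ (outerLift '' {w | w ⬝ᵥ w = ρ}) ↔
      (M - vecMulVec v v).PosSemidef ∧ M.trace = ρ := by
  refine ⟨fun h => convexHull_min ?_ (convex_setOf_posSemidef_sub_vecMulVec ρ) h, ?_⟩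
  · rintro _ ⟨w, hw, rfl⟩
    exact ⟨by simpa [outerLift] using PosSemidef.zero, by simpa [outerLift] using hw⟩
  · rintro ⟨h, rfl⟩
    exact mem_convexHull_outerLift_of_posSemidef h

end OuterLift

theorem AffineMap.mem_convexHull_image_iff {𝕜 E F : Type*} [Ring 𝕜] [PartialOrder 𝕜]
    [AddCommGroup E] [Module 𝕜 E] [AddCommGroup F] [Module 𝕜 F] (f : E →ᵃ[𝕜] F)
    (hf : Function.Injective f) {s : Set E} {x : E} :
    f x ∈ convexHull 𝕜 (f '' s) ↔ x ∈ convexHull 𝕜 s := by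
  rw [← f.image_convexHull, hf.mem_set_image]

theorem eNorm_eq_iff {m : ℕ} {w : Fin m → ℝ} {r : ℝ} (hr : 0 ≤ r) :
    eNorm w = r ↔ w ⬝ᵥ w = r ^ 2 := by
  rw [eNorm, Real.sqrt_eq_iff_eq_sq (by positivity) hr]
  simp [dotProduct, sq]

section M0

variable (n : ℕ)

/-- The set `K̃(r)` of the paper. -/
def liftedSphere (r : ℝ) : Set ((Fin n → ℝ) × M0 n) :=
  {p | ∃ w : Fin n → ℝ, eNorm w = r ∧ p.1 = w ∧
    (p.2 : Matrix (Fin n) (Fin n) ℝ) = vecMulVec w w - (r ^ 2 / n) • (1 : Matrix (Fin n) (Fin n) ℝ)}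

def shiftedInclusion (c : ℝ) : (Fin n → ℝ) × M0 n →ᵃ[ℝ] (Fin n → ℝ) × Matrix (Fin n) (Fin n) ℝ :=
  (LinearMap.id.prodMap (M0 n).subtype).toAffineMap + AffineMap.const ℝ _ (0, c • 1)

variable {n}

@[simp]
theorem shiftedInclusion_apply (c : ℝ) (p : (Fin n → ℝ) × M0 n) :
    shiftedInclusion n c p = (p.1, c • 1 + (p.2 : Matrix (Fin n) (Fin n) ℝ)) := by
  simp [shiftedInclusion, add_comm]

theorem shiftedInclusion_injective (c : ℝ) : Function.Injective (shiftedInclusion n c) := by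
  rintro ⟨v, u⟩ ⟨v', u'⟩ h
  simp only [shiftedInclusion_apply, Prod.mk.injEq, add_right_inj] at h
  exact Prod.ext h.1 (Subtype.ext h.2)

theorem image_shiftedInclusion_liftedSphere (hn : n ≠ 0) {r : ℝ} (hr : 0 ≤ r) :
    shiftedInclusion n (r ^ 2 / n) '' liftedSphere n r = outerLift '' {w | w ⬝ᵥ w = r ^ 2} := by
  have hcn : r ^ 2 / n * n = r ^ 2 := div_mul_cancel₀ _ (Nat.cast_ne_zero.mpr hn)
  ext q
  constructor
  · rintro ⟨⟨v, u⟩, ⟨w, hw, hv, hu⟩, rfl⟩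
    obtain rfl : v = w := hv
    refine ⟨v, (eNorm_eq_iff hr).mp hw, ?_⟩
    simp [outerLift, show (u : Matrix (Fin n) (Fin n) ℝ) = _ from hu]
  · rintro ⟨w, hw : w ⬝ᵥ w = r ^ 2, rfl⟩
    have hmem : vecMulVec w w - (r ^ 2 / n) • (1 : Matrix (Fin n) (Fin n) ℝ) ∈ M0 n :=
      ⟨(by simp [IsSymm] : (vecMulVec w w).IsSymm).sub (isSymm_one.smul _),
        by simp [trace_sub, hw, hcn]⟩
    exact ⟨(w, ⟨_, hmem⟩), ⟨w, (eNorm_eq_iff hr).mpr hw, rfl, rfl⟩, by simp [outerLift]⟩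

theorem efun_le_iff (hn : n ≠ 0) (r : ℝ) (p : (Fin n → ℝ) × M0 n) :
    efun n p ≤ r ^ 2 / 2 ↔
      shiftedInclusion n (r ^ 2 / n) p ∈ convexHull ℝ (outerLift '' {w | w ⬝ᵥ w = r ^ 2}) := by
  have : Nonempty (Fin n) := ⟨⟨0, Nat.pos_of_ne_zero hn⟩⟩
  have hn' : (0 : ℝ) < n := by positivity
  have hsup : efun n p ≤ r ^ 2 / 2 ↔ ∀ i, (herm_aux p.1 p.2).eigenvalues i ≤ r ^ 2 / n := by
    rw [efun, ← ciSup_le_iff (Set.finite_range _).bddAbove, le_div_iff₀ hn']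
    constructor <;> intro h <;> linarith
  rw [hsup, ← (herm_aux p.1 p.2).posSemidef_smul_one_sub_iff, shiftedInclusion_apply,
    mem_convexHull_outerLift_iff, sub_sub_eq_add_sub]
  simp [trace_add, p.2.2.2, div_mul_cancel₀ _ hn'.ne']

end M0

theorem sublevel_eq_convexHull (n : ℕ) (hn : 2 ≤ n) (r : ℝ) (hr : 0 < r) :
    {p : (Fin n → ℝ) × M0 n | efun n p ≤ r ^ 2 / 2} =
      convexHull ℝ {p : (Fin n → ℝ) × M0 n |
        ∃ w : Fin n → ℝ, eNorm w = r ∧ p.1 = w ∧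
          (p.2 : Matrix (Fin n) (Fin n) ℝ) =
            Matrix.vecMulVec w w - ((r ^ 2) / n) • (1 : Matrix (Fin n) (Fin n) ℝ)} := by
  have hn₀ : n ≠ 0 := by omega
  change _ = convexHull ℝ (liftedSphere n r)
  ext p
  rw [Set.mem_ofPred_eq, efun_le_iff hn₀, ← image_shiftedInclusion_liftedSphere hn₀ hr.le,
    AffineMap.mem_convexHull_image_iff _ (shiftedInclusion_injective _)]

end
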